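/- The swap vertices of the Grigorchuk generator d are exactly the words 1^k 0 (k ones followed by a zero) with k ≡ 1 or 2 (mod 3): a binary word v satisfies d(v) = v and d(v·0) = v·1 if and only if v = 1^k 0 for some k ≥ 0 with k ≡ 1 or 2 (mod 3). -/
import Mathlib


/-- The Grigorchuk generator `a`: flips the first bit of a nonempty binary word. -/
def grigA : List Bool → List Bool
  | [] => []
  | false :: w => true :: w
  | true :: w => false :: w

mutual
  /-- The Grigorchuk generator `b`. -/
  def grigB : List Bool → List Bool
    | [] => []
    | false :: w => false :: grigA w
    | true :: w => true :: grigC w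
  /-- The Grigorchuk generator `c`. -/
  def grigC : List Bool → List Bool
    | [] => []
    | false :: w => false :: grigA w
    | true :: w => true :: grigD w
  /-- The Grigorchuk generator `d`. -/
  def grigD : List Bool → List Bool
    | [] => []
    | false :: w => false :: w
    | true :: w => true :: grigB w
end

theorem grigA_involutive : Function.Involutive grigA := by
  intro w
  match w with
  | [] => rfl
  | false :: w => rfl
  | true :: w => rfl

theorem grigBCD_involutive : ∀ w : List Bool,
    grigB (grigB w) = w ∧ grigC (grigC w) = w ∧ grigD (grigD w) = w
  | [] => ⟨rfl, rfl, rfl⟩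
  | false :: w => by
      simp [grigB, grigC, grigD, grigA_involutive w]
  | true :: w => by
      obtain ⟨hb, hc, hd⟩ := grigBCD_involutive w
      simp [grigB, grigC, grigD, hb, hc, hd]

theorem grigB_involutive : Function.Involutive grigB :=
  fun w => (grigBCD_involutive w).1

theorem grigC_involutive : Function.Involutive grigC :=
  fun w => (grigBCD_involutive w).2.1

theorem grigD_involutive : Function.Involutive grigD :=
  fun w => (grigBCD_involutive w).2.2

lemma grigA_fix (w : List Bool) : grigA w = w ↔ w = [] := by
  match w with
  | [] => simp [grigA]
  | false :: w => simp [grigA]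
  | true :: w => simp [grigA]

lemma grig_swap_key : ∀ v : List Bool,
    ((grigD v = v ∧ grigD (v ++ [false]) = v ++ [true]) ↔
      ∃ k : ℕ, (k % 3 = 1 ∨ k % 3 = 2) ∧ v = List.replicate k true ++ [false]) ∧
    ((grigB v = v ∧ grigB (v ++ [false]) = v ++ [true]) ↔
      ∃ k : ℕ, (k % 3 = 0 ∨ k % 3 = 1) ∧ v = List.replicate k true ++ [false]) ∧
    ((grigC v = v ∧ grigC (v ++ [false]) = v ++ [true]) ↔
      ∃ k : ℕ, (k % 3 = 0 ∨ k % 3 = 2) ∧ v = List.replicate k true ++ [false])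
  | [] => by
      refine ⟨?_, ?_, ?_⟩ <;> constructor
      · rintro ⟨-, h⟩; exact absurd h (by decide)
      · rintro ⟨k, -, hv⟩; simp at hv
      · rintro ⟨-, h⟩; exact absurd h (by decide)
      · rintro ⟨k, -, hv⟩; simp at hv
      · rintro ⟨-, h⟩; exact absurd h (by decide)
      · rintro ⟨k, -, hv⟩; simp at hv
  | false :: w => by
      refine ⟨?_, ?_, ?_⟩
      · constructor
        · rintro ⟨-, h⟩
          simp [grigD] at h
        · rintro ⟨k, hk, hv⟩
          match k with
          | 0 => omega
          | j + 1 => rw [List.replicate_succ] at hv; simp at hv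
      all_goals constructor
      · rintro ⟨h1, h2⟩
        simp only [grigB, grigC, List.cons.injEq] at h1
        have hw : w = [] := (grigA_fix w).mp h1.2
        exact ⟨0, Or.inl rfl, by rw [hw]; rfl⟩
      · rintro ⟨k, hk, hv⟩
        match k with
        | 0 =>
            simp at hv
            subst hv
            exact ⟨rfl, rfl⟩
        | j + 1 => rw [List.replicate_succ] at hv; simp at hv
      · rintro ⟨h1, h2⟩
        simp only [grigB, grigC, List.cons.injEq] at h1
        have hw : w = [] := (grigA_fix w).mp h1.2
        exact ⟨0, Or.inl rfl, by rw [hw]; rfl⟩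
      · rintro ⟨k, hk, hv⟩
        match k with
        | 0 =>
            simp at hv
            subst hv
            exact ⟨rfl, rfl⟩
        | j + 1 => rw [List.replicate_succ] at hv; simp at hv
  | true :: w => by
      obtain ⟨hd, hb, hc⟩ := grig_swap_key w
      refine ⟨?_, ?_, ?_⟩ <;> constructor
      · rintro ⟨h1, h2⟩
        simp only [List.cons_append, grigD, List.cons.injEq, true_and] at h1 h2
        obtain ⟨j, hj, hw⟩ := hb.mp ⟨h1, h2⟩
        exact ⟨j + 1, by omega, by rw [List.replicate_succ, hw]; rfl⟩
      · rintro ⟨k, hk, hv⟩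
        match k with
        | 0 => simp at hv
        | j + 1 =>
            rw [List.replicate_succ] at hv
            simp only [List.cons_append, List.cons.injEq, true_and] at hv
            obtain ⟨h1, h2⟩ := hb.mpr ⟨j, by omega, hv⟩
            exact ⟨by simp [grigD, h1], by simp [grigD, h2]⟩
      · rintro ⟨h1, h2⟩
        simp only [List.cons_append, grigB, List.cons.injEq, true_and] at h1 h2
        obtain ⟨j, hj, hw⟩ := hc.mp ⟨h1, h2⟩
        exact ⟨j + 1, by omega, by rw [List.replicate_succ, hw]; rfl⟩
      · rintro ⟨k, hk, hv⟩
        match k with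
        | 0 => simp at hv
        | j + 1 =>
            rw [List.replicate_succ] at hv
            simp only [List.cons_append, List.cons.injEq, true_and] at hv
            obtain ⟨h1, h2⟩ := hc.mpr ⟨j, by omega, hv⟩
            exact ⟨by simp [grigB, h1], by simp [grigB, h2]⟩
      · rintro ⟨h1, h2⟩
        simp only [List.cons_append, grigC, List.cons.injEq, true_and] at h1 h2
        obtain ⟨j, hj, hw⟩ := hd.mp ⟨h1, h2⟩
        exact ⟨j + 1, by omega, by rw [List.replicate_succ, hw]; rfl⟩
      · rintro ⟨k, hk, hv⟩
        match k with
        | 0 => simp at hv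
        | j + 1 =>
            rw [List.replicate_succ] at hv
            simp only [List.cons_append, List.cons.injEq, true_and] at hv
            obtain ⟨h1, h2⟩ := hd.mpr ⟨j, by omega, hv⟩
            exact ⟨by simp [grigC, h1], by simp [grigC, h2]⟩

/-- The swap vertices of the Grigorchuk generator `d` are exactly the words
`1^k 0` with `k ≡ 1` or `2 (mod 3)`. -/
theorem grigD_swap_vertices :
    ∀ v : List Bool,
      (grigD v = v ∧ grigD (v ++ [false]) = v ++ [true]) ↔
        ∃ k : ℕ, (k % 3 = 1 ∨ k % 3 = 2) ∧ v = List.replicate k true ++ [false] := by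
  exact fun v => (grig_swap_key v).1
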